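/- Let d ≥ 1, δ ∈ (0, 1/2], and let A_1, …, A_d ∈ M_n(ℂ) form a fuzzy d-torus of width δ. Then ∑_{j=1}^d Im(A_j)² + ((d−1)·1 − ∑_{j=1}^d Re(A_j))² ≥ (1 − 15·d²·δ)·1 in the Loewner order. -/

import Mathlib

open Matrix
open scoped Matrix.Norms.L2Operator ComplexOrder

noncomputable section

/-- The "real part" `(A + A*)/2` of a square complex matrix. -/
def mRe {n : ℕ} (A : Matrix (Fin n) (Fin n) ℂ) : Matrix (Fin n) (Fin n) ℂ :=
  (1/2 : ℂ) • (A + Aᴴ)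

/-- The "imaginary part" `(A - A*)/(2i)` of a square complex matrix. -/
def mIm {n : ℕ} (A : Matrix (Fin n) (Fin n) ℂ) : Matrix (Fin n) (Fin n) ℂ :=
  (1/(2 * Complex.I) : ℂ) • (A - Aᴴ)

/-!
Write `P_j = 1 - Re A_j` and `C_j = 1 - A_j`. As `Im(A)² + Re(A)² = (A A* + A* A)/2` is `1` up
to `δ`, the left-hand side is `1 + ∑_{i ≠ j} P_i P_j` up to an error of norm `≤ dδ`. Moreover
`4 P_j = C_j C_j* + C_j* C_j` up to `2δ`, so `16 P_i P_j` is, up to commutators, the positive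
matrix `∑ (x y)(x y)*` over `x ∈ {C_i, C_i*}`, `y ∈ {C_j, C_j*}`. These commutators are `O(δ)`
by hypothesis and by an approximate Fuglede estimate `‖[A_i*, A_j]‖ = O(δ)`, and a Hermitian
error of norm `≤ r` is absorbed by `r · 1`.
-/

namespace FuzzyTorus

lemma norm_comm_mul_le {R : Type*} [NormedRing R] (x y z : R) :
    ‖x * (y * z) - y * z * x‖ ≤ ‖x * y - y * x‖ * ‖z‖ + ‖y‖ * ‖x * z - z * x‖ := by
  have h : x * (y * z) - y * z * x = (x * y - y * x) * z + y * (x * z - z * x) := by noncomm_ring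
  rw [h]
  exact (norm_add_le _ _).trans (add_le_add (norm_mul_le _ _) (norm_mul_le _ _))

section StarRing

variable {R : Type*} [Ring R] [StarRing R]

/-- Positive approximation of `(a a* + a* a)(b b* + b* b)`, exact when `a` commutes with `b`
and `b*`. -/
def gramSum (a b : R) : R :=
  (a * b) * star (a * b) + (a * star b) * star (a * star b)
    + (star a * b) * star (star a * b) + (star a * star b) * star (star a * star b)

lemma mul_sub_gramSum (a b : R) :
    (a * star a + star a * a) * (b * star b + star b * b) - gramSum a b =
      a * (star a * (b * star b) - b * star b * star a)
        + a * (star a * (star b * b) - star b * b * star a)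
        + star a * (a * (b * star b) - b * star b * a)
        + star a * (a * (star b * b) - star b * b * a) := by
  simp only [gramSum, star_mul, star_star]
  noncomm_ring

end StarRing

section CStarRing

variable {R : Type*} [NormedRing R] [StarRing R] [CStarRing R]

lemma norm_one_le : ‖(1 : R)‖ ≤ 1 := by
  nontriviality R
  exact CStarRing.norm_one.le

lemma sq_norm_le_one_add (a : R) : ‖a‖ ^ 2 ≤ 1 + ‖star a * a - 1‖ :=
  calc ‖a‖ ^ 2 = ‖(star a * a - 1) + 1‖ := by
        rw [sub_add_cancel, CStarRing.norm_star_mul_self, sq]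
    _ ≤ 1 + ‖star a * a - 1‖ := by linarith [norm_add_le (star a * a - 1) 1, norm_one_le (R := R)]

lemma norm_le_of_norm_star_mul_sub_one_le {a : R} {δ : ℝ} (ha : ‖star a * a - 1‖ ≤ δ)
    (hδ : δ ≤ 1 / 2) : ‖a‖ ≤ 5 / 4 := by
  nlinarith [sq_norm_le_one_add a, norm_nonneg a]

lemma norm_one_sub_le (a : R) : ‖1 - a‖ ≤ 1 + ‖a‖ :=
  (norm_sub_le _ _).trans (by linarith [norm_one_le (R := R)])

lemma norm_star_mul_star_comm (a b : R) :
    ‖star a * star b - star b * star a‖ = ‖a * b - b * a‖ := by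
  rw [← norm_star, star_sub, star_mul, star_mul, star_star, star_star, norm_sub_rev]

lemma norm_star_mul_comm (a b : R) :
    ‖star a * b - b * star a‖ = ‖a * star b - star b * a‖ := by
  rw [← norm_star, star_sub, star_mul, star_mul, star_star, norm_sub_rev]

/-- A quantitative Fuglede theorem. -/
lemma norm_star_mul_comm_le (a b : R) :
    ‖star a * b - b * star a‖ ≤
      ‖a‖ ^ 2 * ‖a * b - b * a‖ + ‖a‖ * ‖b‖ * (‖a * star a - 1‖ + ‖star a * a - 1‖) := by
  have h : star a * b - b * star a = star a * (b * a - a * b) * star a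
      - star a * b * (a * star a - 1) + (star a * a - 1) * (b * star a) := by noncomm_ring
  rw [h]
  calc _ ≤ ‖star a * (b * a - a * b) * star a‖ + ‖star a * b * (a * star a - 1)‖
          + ‖(star a * a - 1) * (b * star a)‖ :=
        (norm_add_le _ _).trans (add_le_add_left (norm_sub_le _ _) _)
    _ ≤ ‖a‖ * ‖b * a - a * b‖ * ‖a‖ + ‖a‖ * ‖b‖ * ‖a * star a - 1‖
          + ‖star a * a - 1‖ * (‖b‖ * ‖a‖) := by
        gcongr
        · exact (norm_mul₃_le ..).trans_eq (by rw [norm_star])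
        · exact (norm_mul₃_le ..).trans_eq (by rw [norm_star])
        · exact (norm_mul_le _ _).trans
            (by gcongr; exact (norm_mul_le _ _).trans_eq (by rw [norm_star]))
    _ = _ := by rw [norm_sub_rev (b * a)]; ring

lemma norm_mul_star_comm_le {a b : R} {δ : ℝ} (hδ : δ ≤ 1 / 2)
    (ha₁ : ‖a * star a - 1‖ ≤ δ) (ha₂ : ‖star a * a - 1‖ ≤ δ) (hb : ‖star b * b - 1‖ ≤ δ)
    (hab : ‖a * b - b * a‖ ≤ δ) : ‖b * star a - star a * b‖ ≤ 5 * δ := by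
  have hna := norm_le_of_norm_star_mul_sub_one_le ha₂ hδ
  have hnb := norm_le_of_norm_star_mul_sub_one_le hb hδ
  have hδ0 : 0 ≤ δ := (norm_nonneg _).trans ha₁
  rw [norm_sub_rev]
  grw [norm_star_mul_comm_le, hna, hnb, ha₁, ha₂, hab]
  linarith

lemma norm_mul_sub_gramSum_le (a b : R) :
    ‖(a * star a + star a * a) * (b * star b + star b * b) - gramSum a b‖ ≤
      4 * ‖a‖ * ‖b‖ * (‖a * b - b * a‖ + ‖a * star b - star b * a‖) := by
  rw [mul_sub_gramSum]
  have h₁ := norm_comm_mul_le (star a) b (star b)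
  have h₂ := norm_comm_mul_le (star a) (star b) b
  have h₃ := norm_comm_mul_le a b (star b)
  have h₄ := norm_comm_mul_le a (star b) b
  rw [norm_star_mul_comm a b, norm_star_mul_star_comm a b, norm_star] at h₁ h₂
  rw [norm_star] at h₃ h₄
  refine norm_add₄_le.trans ?_
  grw [norm_mul_le, norm_mul_le, norm_mul_le (star a), norm_mul_le (star a), norm_star,
    h₁, h₂, h₃, h₄]
  linarith

end CStarRing

lemma sum_sub_one_mul_self {R ι : Type*} [Ring R] [Fintype ι] [DecidableEq ι] (x : ι → R) :
    (∑ i, x i - 1) * (∑ i, x i - 1) =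
      1 + ∑ i, (x i * x i - 2 * x i) + ∑ p ∈ Finset.univ.offDiag, x p.1 * x p.2 := by
  have hsq : (∑ i, x i) * (∑ i, x i) =
      ∑ i, x i * x i + ∑ p ∈ Finset.univ.offDiag, x p.1 * x p.2 := by
    rw [Finset.sum_mul_sum, ← Finset.sum_product', ← Finset.diag_union_offDiag,
      Finset.sum_union (Finset.disjoint_diag_offDiag _), Finset.sum_diag]
  rw [Finset.sum_sub_distrib, ← Finset.mul_sum, sub_mul, mul_sub, hsq]
  noncomm_ring

section PosSemidef

variable {m : Type*} [Fintype m] [DecidableEq m]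

lemma posSemidef_gramSum (a b : Matrix m m ℂ) : (gramSum a b).PosSemidef :=
  (((posSemidef_self_mul_conjTranspose _).add (posSemidef_self_mul_conjTranspose _)).add
    (posSemidef_self_mul_conjTranspose _)).add (posSemidef_self_mul_conjTranspose _)

open scoped MatrixOrder in
lemma posSemidef_smul_one_add {K : Matrix m m ℂ} (hK : K.IsHermitian) {r : ℝ} (h : ‖K‖ ≤ r) :
    ((r : ℂ) • 1 + K).PosSemidef := by
  have hK' := hK.isSelfAdjoint.neg_algebraMap_norm_le_self
  rw [le_iff, sub_neg_eq_add, Algebra.algebraMap_eq_smul_one] at hK'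
  have hr : ((r - ‖K‖) • (1 : Matrix m m ℂ)).PosSemidef := PosSemidef.one.smul (sub_nonneg.mpr h)
  convert hr.add hK' using 1
  rw [Complex.coe_smul]
  module

lemma posSemidef_sub_smul_one_of_norm_le {S T : Matrix m m ℂ} (hS : S.IsHermitian)
    (hT : T.PosSemidef) {r : ℝ} (h : ‖S - 1 - T‖ ≤ r) :
    (S - ((1 - r : ℝ) : ℂ) • 1).PosSemidef := by
  have hK : (S - 1 - T).IsHermitian := (hS.sub isHermitian_one).sub hT.isHermitian
  convert hT.add (posSemidef_smul_one_add hK h) using 1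
  push_cast
  module

end PosSemidef

section Matrix

variable {n : ℕ}

def unitaryDefect (A : Matrix (Fin n) (Fin n) ℂ) : Matrix (Fin n) (Fin n) ℂ :=
  (1 / 2 : ℂ) • ((A * Aᴴ - 1) + (Aᴴ * A - 1))

lemma norm_unitaryDefect_le {A : Matrix (Fin n) (Fin n) ℂ} {δ : ℝ}
    (h₁ : ‖A * Aᴴ - 1‖ ≤ δ) (h₂ : ‖Aᴴ * A - 1‖ ≤ δ) : ‖unitaryDefect A‖ ≤ δ := by
  rw [unitaryDefect, norm_smul]
  grw [norm_add_le, h₁, h₂]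
  norm_num
  linarith

lemma isHermitian_mRe (A : Matrix (Fin n) (Fin n) ℂ) : (mRe A).IsHermitian := by
  rw [IsHermitian, mRe, conjTranspose_smul, conjTranspose_add, conjTranspose_conjTranspose,
    add_comm]
  norm_num

lemma isHermitian_mIm (A : Matrix (Fin n) (Fin n) ℂ) : (mIm A).IsHermitian := by
  have hI : star (1 / (2 * Complex.I)) = -(1 / (2 * Complex.I)) := by simp
  rw [IsHermitian, mIm, conjTranspose_smul, conjTranspose_sub, conjTranspose_conjTranspose, hI,
    neg_smul, ← smul_neg, neg_sub]

lemma norm_mRe_le (A : Matrix (Fin n) (Fin n) ℂ) : ‖mRe A‖ ≤ ‖A‖ := by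
  rw [mRe, norm_smul]
  grw [norm_add_le, l2_opNorm_conjTranspose]
  norm_num
  linarith

lemma norm_one_sub_mRe_le {A : Matrix (Fin n) (Fin n) ℂ} {δ : ℝ} (hA : ‖Aᴴ * A - 1‖ ≤ δ)
    (hδ : δ ≤ 1 / 2) : ‖1 - mRe A‖ ≤ 9 / 4 := by
  grw [norm_one_sub_le, norm_mRe_le, norm_le_of_norm_star_mul_sub_one_le hA hδ]
  norm_num

lemma mIm_mul_self (A : Matrix (Fin n) (Fin n) ℂ) :
    mIm A * mIm A = 1 + unitaryDefect A - mRe A * mRe A := by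
  have hI : (1 / (2 * Complex.I)) * (1 / (2 * Complex.I)) = -(1 / 4 : ℂ) := by
    field_simp
    linear_combination (4 : ℂ) * Complex.I_sq
  simp only [mIm, mRe, unitaryDefect, smul_mul_smul_comm, hI]
  simp only [mul_sub, sub_mul, mul_add, add_mul]
  module

lemma one_sub_mul_conjTranspose_add (A : Matrix (Fin n) (Fin n) ℂ) :
    (1 - A) * (1 - A)ᴴ + (1 - A)ᴴ * (1 - A) =
      (4 : ℂ) • (1 - mRe A) + (2 : ℂ) • unitaryDefect A := by
  simp only [mRe, unitaryDefect, conjTranspose_sub, conjTranspose_one, mul_sub, sub_mul,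
    mul_one, one_mul]
  module

lemma norm_one_sub_mRe_mul_sub_gramSum_le {A B : Matrix (Fin n) (Fin n) ℂ} {δ : ℝ}
    (hδ : δ ≤ 1 / 2) (hA₁ : ‖A * Aᴴ - 1‖ ≤ δ) (hA₂ : ‖Aᴴ * A - 1‖ ≤ δ)
    (hB₁ : ‖B * Bᴴ - 1‖ ≤ δ) (hB₂ : ‖Bᴴ * B - 1‖ ≤ δ) (hAB : ‖B * A - A * B‖ ≤ δ) :
    ‖(1 - mRe A) * (1 - mRe B) - (1 / 16 : ℂ) • gramSum (1 - A) (1 - B)‖ ≤ 10 * δ := by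
  set P := 1 - mRe A
  set Q := 1 - mRe B
  set E := unitaryDefect A
  set F := unitaryDefect B
  have hdecomp : P * Q - (1 / 16 : ℂ) • gramSum (1 - A) (1 - B) =
      (1 / 16 : ℂ) • (((1 - A) * (1 - A)ᴴ + (1 - A)ᴴ * (1 - A)) *
        ((1 - B) * (1 - B)ᴴ + (1 - B)ᴴ * (1 - B)) - gramSum (1 - A) (1 - B))
      - (1 / 2 : ℂ) • (E * Q + (P + (1 / 2 : ℂ) • E) * F) := by
    rw [one_sub_mul_conjTranspose_add, one_sub_mul_conjTranspose_add]
    simp only [add_mul, mul_add, smul_mul_assoc, mul_smul_comm]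
    module
  have hC₁ : ‖(1 - A) * (1 - B) - (1 - B) * (1 - A)‖ ≤ δ := by
    rw [show (1 - A) * (1 - B) - (1 - B) * (1 - A) = -(B * A - A * B) by noncomm_ring, norm_neg]
    exact hAB
  have hC₂ : ‖(1 - A) * (1 - B)ᴴ - (1 - B)ᴴ * (1 - A)‖ ≤ 5 * δ := by
    rw [show (1 - A) * (1 - B)ᴴ - (1 - B)ᴴ * (1 - A) = A * Bᴴ - Bᴴ * A by
      simp only [conjTranspose_sub, conjTranspose_one]; noncomm_ring]
    exact norm_mul_star_comm_le hδ hB₁ hB₂ hA₂ hAB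
  have hG := norm_mul_sub_gramSum_le (1 - A) (1 - B)
  simp only [star_eq_conjTranspose] at hG
  have hδ0 : 0 ≤ δ := (norm_nonneg _).trans hA₁
  have hCA : ‖1 - A‖ ≤ 9 / 4 := by
    grw [norm_one_sub_le, norm_le_of_norm_star_mul_sub_one_le hA₂ hδ]; norm_num
  have hCB : ‖1 - B‖ ≤ 9 / 4 := by
    grw [norm_one_sub_le, norm_le_of_norm_star_mul_sub_one_le hB₂ hδ]; norm_num
  rw [hdecomp]
  grw [norm_sub_le, norm_smul, norm_smul, hG, hC₁, hC₂, hCA, hCB, norm_add_le, norm_mul_le,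
    norm_mul_le, norm_add_le, norm_smul, norm_unitaryDefect_le hA₁ hA₂,
    norm_unitaryDefect_le hB₁ hB₂, norm_one_sub_mRe_le hA₂ hδ, norm_one_sub_mRe_le hB₂ hδ]
  norm_num
  nlinarith

lemma sum_mIm_mul_self_add_eq {d : ℕ} (A : Fin d → Matrix (Fin n) (Fin n) ℂ) :
    (∑ j, mIm (A j) * mIm (A j)) +
      (((d : ℂ) - 1) • (1 : Matrix (Fin n) (Fin n) ℂ) - ∑ j, mRe (A j)) *
        (((d : ℂ) - 1) • (1 : Matrix (Fin n) (Fin n) ℂ) - ∑ j, mRe (A j)) =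
      1 + ∑ j, unitaryDefect (A j) +
        ∑ p ∈ Finset.univ.offDiag, (1 - mRe (A p.1)) * (1 - mRe (A p.2)) := by
  have hB : ((d : ℂ) - 1) • (1 : Matrix (Fin n) (Fin n) ℂ) - ∑ j, mRe (A j) =
      ∑ j, (1 - mRe (A j)) - 1 := by
    simp only [Finset.sum_sub_distrib, Finset.sum_const, Finset.card_univ, Fintype.card_fin,
      ← Nat.cast_smul_eq_nsmul ℂ]
    module
  have hj (j : Fin d) : mIm (A j) * mIm (A j) +
      ((1 - mRe (A j)) * (1 - mRe (A j)) - 2 * (1 - mRe (A j))) = unitaryDefect (A j) := by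
    rw [mIm_mul_self]; noncomm_ring
  rw [hB, sum_sub_one_mul_self, ← Finset.sum_congr rfl fun j _ => hj j, Finset.sum_add_distrib]
  abel

lemma norm_sum_unitaryDefect_add_sum_sub_gramSum_le {d : ℕ} {A : Fin d → Matrix (Fin n) (Fin n) ℂ}
    {δ : ℝ} (hδ0 : 0 ≤ δ) (hδ : δ ≤ 1 / 2) (h₁ : ∀ j, ‖A j * (A j)ᴴ - 1‖ ≤ δ)
    (h₂ : ∀ j, ‖(A j)ᴴ * A j - 1‖ ≤ δ) (h₃ : ∀ i j, ‖A j * A i - A i * A j‖ ≤ δ) :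
    ‖∑ j, unitaryDefect (A j) + ∑ p ∈ Finset.univ.offDiag, ((1 - mRe (A p.1)) *
      (1 - mRe (A p.2)) - (1 / 16 : ℂ) • gramSum (1 - A p.1) (1 - A p.2))‖ ≤ 15 * d ^ 2 * δ := by
  have hE : ‖∑ j, unitaryDefect (A j)‖ ≤ d * δ := by
    simpa using norm_sum_le_of_le Finset.univ fun j _ => norm_unitaryDefect_le (h₁ j) (h₂ j)
  have hcard : ((Finset.univ : Finset (Fin d)).offDiag.card : ℝ) ≤ d ^ 2 := by
    rw [Finset.offDiag_card, Finset.card_univ, Fintype.card_fin, sq]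
    exact_mod_cast Nat.sub_le _ _
  have hK : ‖∑ p ∈ Finset.univ.offDiag, ((1 - mRe (A p.1)) * (1 - mRe (A p.2)) -
      (1 / 16 : ℂ) • gramSum (1 - A p.1) (1 - A p.2))‖ ≤ d ^ 2 * (10 * δ) :=
    calc _ ≤ ∑ _p ∈ Finset.univ.offDiag, 10 * δ := norm_sum_le_of_le _ fun p _ =>
          norm_one_sub_mRe_mul_sub_gramSum_le hδ (h₁ p.1) (h₂ p.1) (h₁ p.2) (h₂ p.2) (h₃ p.1 p.2)
      _ ≤ d ^ 2 * (10 * δ) := by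
        rw [Finset.sum_const, nsmul_eq_mul]
        gcongr
  have hd : (d : ℝ) ≤ d ^ 2 := by exact_mod_cast Nat.le_self_pow two_ne_zero d
  grw [norm_add_le, hE, hK]
  nlinarith

end Matrix

end FuzzyTorus

open FuzzyTorus in
theorem stmt19_general {n : ℕ} (d : ℕ) (δ : ℝ) (hδ0 : 0 < δ) (hδ : δ ≤ 1/2)
    (A : Fin d → Matrix (Fin n) (Fin n) ℂ)
    (h1 : ∀ j, ‖A j * (A j)ᴴ - 1‖ ≤ δ)
    (h2 : ∀ j, ‖(A j)ᴴ * A j - 1‖ ≤ δ)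
    (h3 : ∀ i j, ‖A j * A i - A i * A j‖ ≤ δ) :
    ((∑ j : Fin d, mIm (A j) * mIm (A j)) +
      ((((d : ℂ) - 1) • (1 : Matrix (Fin n) (Fin n) ℂ) - ∑ j : Fin d, mRe (A j)) *
        (((d : ℂ) - 1) • (1 : Matrix (Fin n) (Fin n) ℂ) - ∑ j : Fin d, mRe (A j))) -
      ((1 - 15 * d^2 * δ : ℝ) : ℂ) • 1).PosSemidef := by
  have hsq {H : Matrix (Fin n) (Fin n) ℂ} (hH : IsSelfAdjoint H) : IsSelfAdjoint (H * H) := by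
    simpa only [hH.star_eq] using IsSelfAdjoint.mul_star_self H
  refine posSemidef_sub_smul_one_of_norm_le ?_ (T := ∑ p ∈ Finset.univ.offDiag,
    (1 / 16 : ℂ) • gramSum (1 - A p.1) (1 - A p.2))
    (posSemidef_sum _ fun p _ => (posSemidef_gramSum _ _).smul (by positivity)) ?_
  · refine ((isSelfAdjoint_sum _ fun j _ => hsq (isHermitian_mIm (A j)).isSelfAdjoint).add
      (hsq ?_)).isHermitian
    exact (((IsSelfAdjoint.natCast d).sub (.one ℂ)).smul (.one _)).sub
      (isSelfAdjoint_sum _ fun j _ => (isHermitian_mRe (A j)).isSelfAdjoint)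
  rw [sum_mIm_mul_self_add_eq, show ∀ X Y Z : Matrix (Fin n) (Fin n) ℂ,
    1 + X + Y - 1 - Z = X + (Y - Z) from fun _ _ _ => by abel, ← Finset.sum_sub_distrib]
  exact norm_sum_unitaryDefect_add_sum_sub_gramSum_le hδ0.le hδ h1 h2 h3

/-- if `A_1, …, A_d` form a fuzzy `d`-torus of width `δ ∈ (0, 1/2]`, then
`∑ Im(A_j)² + ((d-1)·1 - ∑ Re(A_j))² ≥ (1 - 15 d² δ)·1` in the Loewner order. -/
theorem stmt19 {n : ℕ} (d : ℕ) (hd : 1 ≤ d) (δ : ℝ) (hδ0 : 0 < δ) (hδ : δ ≤ 1/2)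
    (A : Fin d → Matrix (Fin n) (Fin n) ℂ)
    (hinv : ∀ j, IsUnit (A j))
    (h1 : ∀ j, ‖A j * (A j)ᴴ - 1‖ ≤ δ)
    (h2 : ∀ j, ‖(A j)ᴴ * A j - 1‖ ≤ δ)
    (h3 : ∀ i j, ‖A j * A i - A i * A j‖ ≤ δ) :
    ((∑ j : Fin d, mIm (A j) * mIm (A j)) +
      ((((d : ℂ) - 1) • (1 : Matrix (Fin n) (Fin n) ℂ) - ∑ j : Fin d, mRe (A j)) *
        (((d : ℂ) - 1) • (1 : Matrix (Fin n) (Fin n) ℂ) - ∑ j : Fin d, mRe (A j))) -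
      ((1 - 15 * d^2 * δ : ℝ) : ℂ) • 1).PosSemidef :=
  stmt19_general d δ hδ0 hδ A h1 h2 h3
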